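/- arXiv:math-ph/0304027 — 7 statements merged into one kernel-verified Lean document; each statement's English description precedes it below -/
import Mathlib

section
/- Let δ ∈ ℝ and let n ≥ 1 be an integer. Define ρ_n(δ,t) := ((1-t)^δ − ∑_{k=0}^{n-1} ((-δ)_k / k!) t^k) / t^n for t ∈ (0,1) and ρ_n(δ,0) := (-δ)_n / n!. Then for every t ∈ [0,1), the sign of ρ_n(δ,t) is constant in t and equals the sign of (-δ)_n (where sign 0 := 0); that is, if (-δ)_n > 0 then ρ_n(δ,t) > 0 for all t ∈ [0,1), if (-δ)_n < 0 then ρ_n(δ,t) < 0 for all t ∈ [0,1), and if (-δ)_n = 0 then ρ_n(δ,t) = 0 for all t ∈ [0,1). -/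
open MeasureTheory Real Filter

noncomputable def poch (a : ℝ) : ℕ → ℝ
  | 0 => 1
  | k + 1 => poch a k * (a + k)

/-!
The `k`-th derivative of `(1 - x) ^ δ` is `(-δ)_k (1 - x) ^ (δ - k)`, so the Lagrange form of
Taylor's theorem writes `ρ_n(δ, t)` as `(-δ)_n / n! · (1 - ξ) ^ (δ - n)` for some `ξ ∈ (0, t)`:
a positive multiple of `(-δ)_n`.
-/

open Set Nat

noncomputable def taylorRemainderQuotient (δ : ℝ) (n : ℕ) (t : ℝ) : ℝ :=
  if t = 0 then poch (-δ) n / (n.factorial : ℝ)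
  else ((1 - t) ^ δ -
    ∑ k ∈ Finset.range n, poch (-δ) k / (k.factorial : ℝ) * t ^ k) / t ^ n

theorem hasDerivAt_poch_mul_one_sub_rpow (δ : ℝ) (k : ℕ) {x : ℝ} (hx : x < 1) :
    HasDerivAt (fun y : ℝ => poch (-δ) k * (1 - y) ^ (δ - k))
      (poch (-δ) (k + 1) * (1 - x) ^ (δ - (k + 1 : ℕ))) x := by
  have hpow : HasDerivAt (fun y : ℝ => (1 - y) ^ (δ - k))
      ((δ - k) * (1 - x) ^ (δ - k - 1) * -1) x :=
    (Real.hasDerivAt_rpow_const (Or.inl (sub_pos.2 hx).ne')).comp x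
      ((hasDerivAt_id x).const_sub 1)
  refine (hpow.const_mul (poch (-δ) k)).congr_deriv ?_
  rw [show δ - (k + 1 : ℕ) = δ - k - 1 by push_cast; ring, poch]
  ring

theorem iteratedDerivWithin_one_sub_rpow (δ : ℝ) (k : ℕ) {s : Set ℝ}
    (hs : UniqueDiffOn ℝ s) (hs1 : s ⊆ Iio 1) :
    EqOn (iteratedDerivWithin k (fun x : ℝ => (1 - x) ^ δ) s)
      (fun x => poch (-δ) k * (1 - x) ^ (δ - k)) s := by
  induction k with
  | zero => intro x _; simp [poch]
  | succ k ih =>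
    intro x hx
    rw [iteratedDerivWithin_succ, derivWithin_congr ih (ih hx)]
    exact (hasDerivAt_poch_mul_one_sub_rpow δ k (hs1 hx)).hasDerivWithinAt.derivWithin (hs x hx)

theorem taylorWithinEval_one_sub_rpow (δ : ℝ) (n : ℕ) {s : Set ℝ}
    (hs : UniqueDiffOn ℝ s) (hs1 : s ⊆ Iio 1) (h0 : 0 ∈ s) (t : ℝ) :
    taylorWithinEval (fun x : ℝ => (1 - x) ^ δ) n s 0 t =
      ∑ k ∈ Finset.range (n + 1), poch (-δ) k / (k ! : ℝ) * t ^ k := by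
  rw [taylor_within_apply]
  refine Finset.sum_congr rfl fun k _ => ?_
  rw [iteratedDerivWithin_one_sub_rpow δ k hs hs1 h0]
  simp only [sub_zero, one_rpow, mul_one, smul_eq_mul]
  ring

theorem exists_one_sub_rpow_sub_sum_eq (δ : ℝ) (n : ℕ) {t : ℝ} (ht0 : 0 < t) (ht1 : t < 1) :
    ∃ ξ ∈ Ioo 0 t, (1 - t) ^ δ - ∑ k ∈ Finset.range (n + 1), poch (-δ) k / (k ! : ℝ) * t ^ k =
      poch (-δ) (n + 1) * (1 - ξ) ^ (δ - (n + 1 : ℕ)) * t ^ (n + 1) / (n + 1)! := by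
  have hsub : Icc 0 t ⊆ Iio 1 := fun x hx => hx.2.trans_lt ht1
  have hs := uniqueDiffOn_Icc ht0
  have hf : ContDiffOn ℝ n (fun x : ℝ => (1 - x) ^ δ) (Icc 0 t) := fun x hx =>
    ((contDiffAt_rpow_const_of_ne (sub_pos.2 (hsub hx)).ne').comp x
      (contDiffAt_const.sub contDiffAt_id)).contDiffWithinAt
  have hf' : DifferentiableOn ℝ
      (iteratedDerivWithin n (fun x : ℝ => (1 - x) ^ δ) (Icc 0 t)) (Ioo 0 t) := fun x hx =>
    (hasDerivAt_poch_mul_one_sub_rpow δ n (hx.2.trans ht1)).differentiableAt.differentiableWithinAt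
      |>.congr (fun y hy => iteratedDerivWithin_one_sub_rpow δ n hs hsub (Ioo_subset_Icc_self hy))
        (iteratedDerivWithin_one_sub_rpow δ n hs hsub (Ioo_subset_Icc_self hx))
  rw [← uIcc_of_le ht0.le, ← uIoo_of_le ht0.le] at hf'
  rw [← uIcc_of_le ht0.le] at hf
  obtain ⟨ξ, hξ, hEq⟩ := taylor_mean_remainder_lagrange ht0.ne hf hf'
  rw [uIcc_of_le ht0.le] at hEq
  rw [uIoo_of_le ht0.le] at hξ
  refine ⟨ξ, hξ, ?_⟩
  rw [← taylorWithinEval_one_sub_rpow δ n hs hsub (left_mem_Icc.2 ht0.le), hEq,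
    iteratedDerivWithin_one_sub_rpow δ (n + 1) hs hsub (Ioo_subset_Icc_self hξ), sub_zero]

theorem exists_pos_taylorRemainderQuotient_eq_poch_mul (δ : ℝ) (n : ℕ) {t : ℝ}
    (ht : t ∈ Ico 0 1) : ∃ c > 0, taylorRemainderQuotient δ n t = poch (-δ) n * c := by
  rcases ht.1.eq_or_lt with rfl | ht0
  · exact ⟨(n ! : ℝ)⁻¹, by positivity, by simp [taylorRemainderQuotient, div_eq_mul_inv]⟩
  rw [taylorRemainderQuotient, if_neg ht0.ne']
  cases n with
  | zero => exact ⟨(1 - t) ^ δ, rpow_pos_of_pos (sub_pos.2 ht.2) δ, by simp [poch]⟩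
  | succ n =>
    obtain ⟨ξ, hξ, hEq⟩ := exists_one_sub_rpow_sub_sum_eq δ n ht0 ht.2
    have hξ1 : 0 < 1 - ξ := by linarith [hξ.2, ht.2]
    refine ⟨(1 - ξ) ^ (δ - (n + 1 : ℕ)) / (n + 1)!, by positivity, ?_⟩
    rw [hEq]
    field_simp

theorem taylor_remainder_sign_general (δ : ℝ) (n : ℕ) :
    let ρ : ℝ → ℝ := fun t =>
      if t = 0 then poch (-δ) n / (n.factorial : ℝ)
      else ((1 - t) ^ δ -
        ∑ k ∈ Finset.range n, poch (-δ) k / (k.factorial : ℝ) * t ^ k) / t ^ n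
    (0 < poch (-δ) n → ∀ t ∈ Set.Ico (0:ℝ) 1, 0 < ρ t) ∧
    (poch (-δ) n < 0 → ∀ t ∈ Set.Ico (0:ℝ) 1, ρ t < 0) ∧
    (poch (-δ) n = 0 → ∀ t ∈ Set.Ico (0:ℝ) 1, ρ t = 0) := by
  intro ρ
  have hρ : ∀ t ∈ Ico (0 : ℝ) 1, ∃ c > 0, ρ t = poch (-δ) n * c :=
    fun t ht => exists_pos_taylorRemainderQuotient_eq_poch_mul δ n ht
  refine ⟨fun h t ht => ?_, fun h t ht => ?_, fun h t ht => ?_⟩ <;>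
    obtain ⟨c, hc, heq⟩ := hρ t ht <;> rw [heq]
  · exact mul_pos h hc
  · exact mul_neg_of_neg_of_pos h hc
  · rw [h, zero_mul]

theorem taylor_remainder_sign (δ : ℝ) (n : ℕ) (hn : 1 ≤ n) :
    let ρ : ℝ → ℝ := fun t =>
      if t = 0 then poch (-δ) n / (n.factorial : ℝ)
      else ((1 - t) ^ δ -
        ∑ k ∈ Finset.range n, poch (-δ) k / (k.factorial : ℝ) * t ^ k) / t ^ n
    (0 < poch (-δ) n → ∀ t ∈ Set.Ico (0:ℝ) 1, 0 < ρ t) ∧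
    (poch (-δ) n < 0 → ∀ t ∈ Set.Ico (0:ℝ) 1, ρ t < 0) ∧
    (poch (-δ) n = 0 → ∀ t ∈ Set.Ico (0:ℝ) 1, ρ t = 0) :=
  taylor_remainder_sign_general δ n
end

section
/- Let δ ∈ ℝ and let n ≥ 1 be an integer. Define ρ_n(δ,t) := ((-δ)_n / (n-1)!) ∫₀¹ (1-u)^{n-1} (1-tu)^{δ-n} du for t ∈ [0,1). Then ρ_n(δ,·) is differentiable on [0,1), its derivative satisfies ρ_n'(δ,t) = ((-δ)_{n+1} / (n-1)!) ∫₀¹ u (1-u)^{n-1} (1-tu)^{δ-n-1} du for all t ∈ [0,1), and for every t ∈ [0,1) the sign of ρ_n'(δ,t) equals the sign of (-δ)_{n+1} (where sign 0 := 0). -/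
/-!
Differentiate under the integral sign: on a compact neighbourhood `s` of `t < 1` one has
`1 - x u > 0` for `x ∈ s`, `u ∈ [0, 1]`, so the integrand and its `x`-derivative are continuous on
`s × [0, 1]`, hence dominated. The derivative is `(-δ)_n (n - δ) / (n-1)!` times the integral of
`u (1-u)^(n-1) (1-tu)^(δ-n-1)`, and `(-δ)_n (n - δ) = (-δ)_{n+1}`. That integral has an integrand
positive on `(0, 1)`, so the sign of `ρ'` is the sign of `(-δ)_{n+1}`.
-/

open MeasureTheory Real Filter

open Set Function Topology intervalIntegral
open scoped Interval

theorem intervalIntegral.hasDerivAt_integral_of_continuousOn_uncurry {𝕜 E : Type*} [RCLike 𝕜]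
    [NormedAddCommGroup E] [NormedSpace ℝ E] [NormedSpace 𝕜 E]
    {F F' : 𝕜 → ℝ → E} {x₀ : 𝕜} {a b : ℝ} {s : Set 𝕜}
    (hs : s ∈ 𝓝 x₀) (hsc : IsCompact s)
    (hF : ContinuousOn (uncurry F) (s ×ˢ [[a, b]]))
    (hF' : ContinuousOn (uncurry F') (s ×ˢ [[a, b]]))
    (hdiff : ∀ x ∈ s, ∀ u ∈ [[a, b]], HasDerivAt (F · u) (F' x u) x) :
    HasDerivAt (fun x => ∫ u in a..b, F x u) (∫ u in a..b, F' x₀ u) x₀ := by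
  have hsection : ∀ {G : 𝕜 → ℝ → E}, ContinuousOn (uncurry G) (s ×ˢ [[a, b]]) →
      ∀ x ∈ s, ContinuousOn (G x) [[a, b]] := fun hG x hx =>
    hG.comp (Continuous.prodMk_right x).continuousOn fun _ hu => ⟨hx, hu⟩
  have hx₀ : x₀ ∈ s := mem_of_mem_nhds hs
  obtain ⟨C, hC⟩ := (hsc.prod isCompact_uIcc).exists_bound_of_continuousOn hF'
  exact (hasDerivAt_integral_of_dominated_loc_of_deriv_le (bound := fun _ => C) hs
    (eventually_of_mem hs fun x hx =>
      ((hsection hF x hx).mono uIoc_subset_uIcc).aestronglyMeasurable measurableSet_uIoc)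
    (hsection hF x₀ hx₀).intervalIntegrable
    (((hsection hF' x₀ hx₀).mono uIoc_subset_uIcc).aestronglyMeasurable measurableSet_uIoc)
    (ae_of_all _ fun u hu x hx => hC (x, u) ⟨hx, uIoc_subset_uIcc hu⟩) intervalIntegrable_const
    (ae_of_all _ fun u hu x hx => hdiff x hx u (uIoc_subset_uIcc hu))).2

theorem one_sub_mul_pos {x u : ℝ} (hx : x < 1) (hu : u ∈ Icc (0:ℝ) 1) : 0 < 1 - x * u := by
  rcases le_or_gt x 0 with h | h
  · nlinarith [hu.1]
  · nlinarith [hu.2]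

theorem hasDerivAt_integral_mul_one_sub_mul_rpow {g : ℝ → ℝ} (hg : Continuous g) (p : ℝ)
    {t : ℝ} (ht : t < 1) :
    HasDerivAt (fun x => ∫ u in (0:ℝ)..1, g u * (1 - x * u) ^ p)
      (-p * ∫ u in (0:ℝ)..1, u * g u * (1 - t * u) ^ (p - 1)) t := by
  set s := Icc (t - (1 - t) / 2) (t + (1 - t) / 2)
  have hs : s ∈ 𝓝 t := Icc_mem_nhds (by linarith) (by linarith)
  have hbase : ∀ z ∈ s ×ˢ [[(0:ℝ), 1]], 1 - z.1 * z.2 ≠ 0 := fun z hz => by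
    rw [uIcc_of_le zero_le_one] at hz
    exact (one_sub_mul_pos (by linarith [hz.1.2]) hz.2).ne'
  have hderiv := hasDerivAt_integral_of_continuousOn_uncurry hs isCompact_Icc
    (F := fun x u => g u * (1 - x * u) ^ p)
    (F' := fun x u => g u * (-(1 * u) * p * (1 - x * u) ^ (p - 1)))
    ((hg.comp continuous_snd).continuousOn.mul
      ((by fun_prop : Continuous _).continuousOn.rpow_const fun z hz => Or.inl (hbase z hz)))
    ((hg.comp continuous_snd).continuousOn.mul ((by fun_prop : Continuous _).continuousOn.mul
      ((by fun_prop : Continuous _).continuousOn.rpow_const fun z hz => Or.inl (hbase z hz))))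
    fun x hx u hu => ((((hasDerivAt_id x).mul_const u).const_sub 1).rpow_const
      (Or.inl (hbase (x, u) ⟨hx, hu⟩))).const_mul (g u)
  refine hderiv.congr_deriv ?_
  rw [← intervalIntegral.integral_const_mul]
  congr 1 with u
  ring

theorem integral_mul_pow_mul_one_sub_mul_rpow_pos (k : ℕ) (q : ℝ) {t : ℝ} (ht : t < 1) :
    0 < ∫ u in (0:ℝ)..1, u * (1 - u) ^ k * (1 - t * u) ^ q := by
  have hbase : ∀ u ∈ Icc (0:ℝ) 1, 0 < 1 - t * u := fun u hu => one_sub_mul_pos ht hu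
  refine intervalIntegral_pos_of_pos_on ?_ (fun u hu => ?_) one_pos
  · refine ContinuousOn.intervalIntegrable ?_
    rw [uIcc_of_le zero_le_one]
    exact (by fun_prop : Continuous _).continuousOn.mul
      ((by fun_prop : Continuous _).continuousOn.rpow_const fun u hu => Or.inl (hbase u hu).ne')
  · have h1u : 0 < 1 - u := by linarith [hu.2]
    have := hbase u (Ioo_subset_Icc_self hu)
    have := hu.1
    positivity

theorem taylor_remainder_derivative_general (δ : ℝ) (n : ℕ) :
    let ρ : ℝ → ℝ := fun t =>
      poch (-δ) n / ((n - 1).factorial : ℝ) *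
        ∫ u in (0:ℝ)..1, (1 - u) ^ (n - 1) * (1 - t * u) ^ (δ - (n:ℝ))
    let ρ' : ℝ → ℝ := fun t =>
      poch (-δ) (n + 1) / ((n - 1).factorial : ℝ) *
        ∫ u in (0:ℝ)..1, u * (1 - u) ^ (n - 1) * (1 - t * u) ^ (δ - (n:ℝ) - 1)
    ∀ t ∈ Set.Ico (0:ℝ) 1,
      HasDerivAt ρ (ρ' t) t ∧
      (0 < poch (-δ) (n + 1) → 0 < ρ' t) ∧
      (poch (-δ) (n + 1) < 0 → ρ' t < 0) ∧
      (poch (-δ) (n + 1) = 0 → ρ' t = 0) := by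
  intro ρ ρ' t ⟨_, ht⟩
  have hI := integral_mul_pow_mul_one_sub_mul_rpow_pos (n - 1) (δ - n - 1) ht
  have hfac : (0:ℝ) < (n - 1).factorial := by positivity
  refine ⟨?_, fun h => mul_pos (div_pos h hfac) hI,
    fun h => mul_neg_of_neg_of_pos (div_neg_of_neg_of_pos h hfac) hI, fun h => by simp [ρ', h]⟩
  refine ((hasDerivAt_integral_mul_one_sub_mul_rpow (g := fun u => (1 - u) ^ (n - 1))
    (by fun_prop) (δ - n) ht).const_mul (poch (-δ) n / (n - 1).factorial)).congr_deriv ?_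
  simp only [ρ', poch]
  ring

theorem taylor_remainder_derivative (δ : ℝ) (n : ℕ) (hn : 1 ≤ n) :
    let ρ : ℝ → ℝ := fun t =>
      poch (-δ) n / ((n - 1).factorial : ℝ) *
        ∫ u in (0:ℝ)..1, (1 - u) ^ (n - 1) * (1 - t * u) ^ (δ - (n:ℝ))
    let ρ' : ℝ → ℝ := fun t =>
      poch (-δ) (n + 1) / ((n - 1).factorial : ℝ) *
        ∫ u in (0:ℝ)..1, u * (1 - u) ^ (n - 1) * (1 - t * u) ^ (δ - (n:ℝ) - 1)
    ∀ t ∈ Set.Ico (0:ℝ) 1,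
      HasDerivAt ρ (ρ' t) t ∧
      (0 < poch (-δ) (n + 1) → 0 < ρ' t) ∧
      (poch (-δ) (n + 1) < 0 → ρ' t < 0) ∧
      (poch (-δ) (n + 1) = 0 → ρ' t = 0) :=
  taylor_remainder_derivative_general δ n
end

section
/- Let δ ∈ (-∞,0) and let n ≥ 1 be an integer. Define ρ_n(δ,t) := ((1-t)^δ − ∑_{k=0}^{n-1} ((-δ)_k / k!) t^k) / t^n for t ∈ (0,1) and ρ_n(δ,0) := (-δ)_n / n!. Then the infimum of ρ_n(δ,t) over t ∈ [0,1) equals (-δ)_n / n!, and ρ_n(δ,·) is unbounded above on [0,1). -/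
open MeasureTheory Real Filter

/-
The binomial series `(1 - t) ^ δ = ∑ₖ (-δ)ₖ / k! tᵏ` has nonnegative coefficients when `δ ≤ 0`,
so for `0 < t < 1` the remainder `ρₙ(δ, t) = ∑_{k ≥ n} (-δ)ₖ / k! t^(k - n)` is at least its
first term `(-δ)ₙ / n! = ρₙ(δ, 0)`. Dropping the division by `tⁿ ≤ 1` and bounding the Taylor
polynomial by its value at `t = 1` gives `ρₙ(δ, t) ≥ (1 - t) ^ δ - ∑_{k < n} (-δ)ₖ / k!`, which
tends to `∞` as `t → 1⁻` when `δ < 0`.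
-/

open Finset Topology
open scoped Nat

lemma poch_eq_eval_ascPochhammer (a : ℝ) : ∀ k, poch a k = (ascPochhammer ℝ k).eval a
  | 0 => by simp [poch]
  | k + 1 => by rw [poch, ascPochhammer_succ_eval, poch_eq_eval_ascPochhammer a k]

lemma ring_choose_eq_poch_div_factorial (a : ℝ) (k : ℕ) :
    Ring.choose (a + k - 1) k = poch a k / k ! := by
  rw [← Ring.multichoose_eq, poch_eq_eval_ascPochhammer, ← Polynomial.ascPochhammer_smeval_eq_eval,
    ← Ring.factorial_nsmul_multichoose_eq_ascPochhammer, nsmul_eq_mul]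
  field_simp

lemma poch_nonneg {a : ℝ} (ha : 0 ≤ a) : ∀ k, 0 ≤ poch a k
  | 0 => zero_le_one
  | k + 1 => mul_nonneg (poch_nonneg ha k) (by positivity)

lemma hasSum_poch_div_factorial_mul_pow (a : ℝ) {t : ℝ} (ht : |t| < 1) :
    HasSum (fun k ↦ poch a k / k ! * t ^ k) ((1 - t) ^ (-a)) := by
  have hmem : t ∈ Metric.eball (0 : ℝ) 1 := by
    simpa [enorm_eq_nnnorm, ← NNReal.coe_lt_one] using ht
  have := (Real.one_div_one_sub_rpow_hasFPowerSeriesOnBall_zero a).hasSum hmem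
  rw [Real.rpow_neg (by linarith [le_abs_self t]), ← one_div]
  simpa [FormalMultilinearSeries.ofScalars_apply_eq, ring_choose_eq_poch_div_factorial,
    mul_comm] using this

lemma sum_range_poch_div_factorial_mul_pow_le {δ t : ℝ} (hδ : δ ≤ 0) (ht₀ : 0 ≤ t) (ht₁ : t < 1)
    (n : ℕ) : ∑ k ∈ range n, poch (-δ) k / k ! * t ^ k ≤ (1 - t) ^ δ := by
  have hsum := hasSum_poch_div_factorial_mul_pow (-δ) (abs_lt.2 ⟨by linarith, ht₁⟩)
  rw [neg_neg] at hsum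
  exact sum_le_hasSum _ (fun k _ ↦ by have := poch_nonneg (neg_nonneg.2 hδ) k; positivity) hsum

noncomputable def binomialRemainder (δ : ℝ) (n : ℕ) (t : ℝ) : ℝ :=
  ((1 - t) ^ δ - ∑ k ∈ range n, poch (-δ) k / k ! * t ^ k) / t ^ n

lemma poch_div_factorial_le_binomialRemainder {δ t : ℝ} (hδ : δ ≤ 0) (ht₀ : 0 < t) (ht₁ : t < 1)
    (n : ℕ) : poch (-δ) n / n ! ≤ binomialRemainder δ n t := by
  have h := sum_range_poch_div_factorial_mul_pow_le hδ ht₀.le ht₁ (n + 1)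
  rw [sum_range_succ] at h
  rw [binomialRemainder, le_div_iff₀ (by positivity)]
  linarith

lemma one_sub_rpow_sub_le_binomialRemainder {δ t : ℝ} (hδ : δ ≤ 0) (ht₀ : 0 < t) (ht₁ : t < 1)
    (n : ℕ) : (1 - t) ^ δ - ∑ k ∈ range n, poch (-δ) k / k ! ≤ binomialRemainder δ n t := by
  have hpoly : ∑ k ∈ range n, poch (-δ) k / k ! * t ^ k ≤ ∑ k ∈ range n, poch (-δ) k / k ! :=
    sum_le_sum fun k _ ↦ mul_le_of_le_one_right
      (div_nonneg (poch_nonneg (neg_nonneg.2 hδ) k) (Nat.cast_nonneg _))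
      (pow_le_one₀ ht₀.le ht₁.le)
  have hnum := sum_range_poch_div_factorial_mul_pow_le hδ ht₀.le ht₁ n
  calc (1 - t) ^ δ - ∑ k ∈ range n, poch (-δ) k / k !
      ≤ (1 - t) ^ δ - ∑ k ∈ range n, poch (-δ) k / k ! * t ^ k := by linarith
    _ ≤ binomialRemainder δ n t :=
      le_div_self (sub_nonneg.2 hnum) (by positivity) (pow_le_one₀ ht₀.le ht₁.le)

lemma tendsto_one_sub_rpow_nhdsLT_one {δ : ℝ} (hδ : δ < 0) :
    Tendsto (fun t : ℝ ↦ (1 - t) ^ δ) (𝓝[<] 1) atTop := by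
  refine (tendsto_rpow_neg_nhdsGT_zero hδ).comp ?_
  refine tendsto_nhdsWithin_of_tendsto_nhds_of_eventually_within _ ?_ ?_
  · simpa using ((continuous_sub_left (1 : ℝ)).tendsto 1).mono_left nhdsWithin_le_nhds
  · filter_upwards [self_mem_nhdsWithin] with t (ht : t < 1)
    exact sub_pos.2 ht

theorem taylor_remainder_inf_unbounded_neg_delta_general
    (δ : ℝ) (hδ : δ < 0) (n : ℕ) :
    let ρ : ℝ → ℝ := fun t =>
      if t = 0 then poch (-δ) n / (n.factorial : ℝ)
      else ((1 - t) ^ δ -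
        ∑ k ∈ Finset.range n, poch (-δ) k / (k.factorial : ℝ) * t ^ k) / t ^ n
    sInf (ρ '' Set.Ico 0 1) = poch (-δ) n / (n.factorial : ℝ) ∧
    ¬ BddAbove (ρ '' Set.Ico 0 1) := by
  intro ρ
  have hρ_pos {t : ℝ} (ht₀ : 0 < t) : ρ t = binomialRemainder δ n t := if_neg ht₀.ne'
  have hρ_ge : ∀ t ∈ Set.Ico (0 : ℝ) 1, poch (-δ) n / n ! ≤ ρ t := by
    rintro t ⟨ht₀, ht₁⟩
    rcases ht₀.eq_or_lt with rfl | ht₀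
    · exact (if_pos rfl).ge
    · exact (hρ_pos ht₀).symm ▸ poch_div_factorial_le_binomialRemainder hδ.le ht₀ ht₁ n
  refine ⟨IsLeast.csInf_eq ⟨⟨0, ⟨le_rfl, one_pos⟩, if_pos rfl⟩, ?_⟩, ?_⟩
  · rintro _ ⟨t, ht, rfl⟩
    exact hρ_ge t ht
  · rw [not_bddAbove_iff]
    intro M
    obtain ⟨t, hMt, ht₀, ht₁⟩ := (((tendsto_one_sub_rpow_nhdsLT_one hδ).eventually_gt_atTop
      (M + ∑ k ∈ range n, poch (-δ) k / k !)).and (Ioo_mem_nhdsLT zero_lt_one)).exists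
    refine ⟨ρ t, ⟨t, ⟨ht₀.le, ht₁⟩, rfl⟩, ?_⟩
    linarith [hρ_pos ht₀, one_sub_rpow_sub_le_binomialRemainder hδ.le ht₀ ht₁ n]

theorem taylor_remainder_inf_unbounded_neg_delta
    (δ : ℝ) (hδ : δ < 0) (n : ℕ) (hn : 1 ≤ n) :
    let ρ : ℝ → ℝ := fun t =>
      if t = 0 then poch (-δ) n / (n.factorial : ℝ)
      else ((1 - t) ^ δ -
        ∑ k ∈ Finset.range n, poch (-δ) k / (k.factorial : ℝ) * t ^ k) / t ^ n
    sInf (ρ '' Set.Ico 0 1) = poch (-δ) n / (n.factorial : ℝ) ∧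
    ¬ BddAbove (ρ '' Set.Ico 0 1) :=
  taylor_remainder_inf_unbounded_neg_delta_general δ hδ n
end

section
/- Let δ ∈ [0,∞), α ∈ (0,∞), let n ≥ 1 be an integer and let x ∈ (0,∞). Then ∑_{k=0}^{n-1} ((-δ)_k / k!) γ(α+k,x)/x^{α+k} + r_n(δ) γ(α+n,x)/x^{α+n} ≤ N(α,δ,x) ≤ ∑_{k=0}^{n-1} ((-δ)_k / k!) γ(α+k,x)/x^{α+k} + R_n(δ) γ(α+n,x)/x^{α+n}, where r_n(δ) := min((-δ)_n/n!, −(1-δ)_{n-1}/(n-1)!) and R_n(δ) := max((-δ)_n/n!, −(1-δ)_{n-1}/(n-1)!). -/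
open MeasureTheory Real Filter

/-- The lower incomplete Gamma function `γ(ν,x) = ∫₀ˣ s^(ν-1) e^(-s) ds`. -/
noncomputable def lincGamma (ν x : ℝ) : ℝ := ∫ s in (0:ℝ)..x, s ^ (ν - 1) * Real.exp (-s)

/-- The reparametrized Kummer function `N(α,δ,x) = ∫₀¹ t^(α-1) (1-t)^δ e^(-xt) dt`. -/
noncomputable def NKummer (α δ x : ℝ) : ℝ :=
  ∫ t in (0:ℝ)..1, t ^ (α - 1) * (1 - t) ^ δ * Real.exp (-(x * t))

/-!
For `0 ≤ t < 1`, Taylor's formula with integral remainder for `(1 - t) ^ δ` reads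
`(1 - t) ^ δ = ∑_{k<n} c_k t ^ k + n c_n t ^ n K_n(t)`, where `c_k = (-δ)_k / k!` and
`K_n(t) = ∫₀¹ (1 - v) ^ (n - 1) (1 - t v) ^ (δ - n) dv`. The integrand of `K_n` is monotone in `t`,
so for `δ > 0` the value `K_n(t)` lies between `K_n(0) = 1/n` and `K_n(1) = 1/δ`. As
`n c_n = -δ (1-δ)_{n-1}/(n-1)!`, the remainder therefore lies between `c_n t ^ n` and
`-(1-δ)_{n-1}/(n-1)! t ^ n` (for `δ = 0` it vanishes, and so does `c_n`). Multiplying by the weight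
`t ^ (α - 1) e ^ (-x t) ≥ 0` and integrating over `[0, 1]`, with
`∫₀¹ t ^ (α + k - 1) e ^ (-x t) dt = γ(α + k, x) / x ^ (α + k)`, gives both bounds.
-/

open Set intervalIntegral

lemma poch_succ_left (a : ℝ) (k : ℕ) : poch a (k + 1) = a * poch (a + 1) k := by
  induction k with
  | zero => simp [poch]
  | succ k ih => rw [poch, ih, poch]; push_cast; ring

/-- The coefficient of `t ^ k` in the binomial series of `(1 - t) ^ δ`. -/
noncomputable def oneSubRpowCoeff (δ : ℝ) (k : ℕ) : ℝ := poch (-δ) k / k.factorial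

lemma oneSubRpowCoeff_zero (δ : ℝ) : oneSubRpowCoeff δ 0 = 1 := by
  simp [oneSubRpowCoeff, poch]

lemma succ_mul_oneSubRpowCoeff_succ (δ : ℝ) (n : ℕ) :
    ((n : ℝ) + 1) * oneSubRpowCoeff δ (n + 1) = (n - δ) * oneSubRpowCoeff δ n := by
  simp only [oneSubRpowCoeff, poch, Nat.factorial_succ, Nat.cast_mul, Nat.cast_succ]
  field_simp
  ring

lemma succ_mul_oneSubRpowCoeff_succ_eq_neg_mul (δ : ℝ) (n : ℕ) :
    ((n : ℝ) + 1) * oneSubRpowCoeff δ (n + 1) = -δ * (poch (1 - δ) n / n.factorial) := by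
  rw [oneSubRpowCoeff, poch_succ_left, neg_add_eq_sub, Nat.factorial_succ]
  push_cast
  field_simp

noncomputable def remainderKernel (δ : ℝ) (n : ℕ) (t : ℝ) : ℝ :=
  ∫ v in (0 : ℝ)..1, (1 - v) ^ (n - 1) * (1 - t * v) ^ (δ - n)

section RemainderKernel

variable {t : ℝ}

lemma one_sub_mul_pos_s9 (ht0 : 0 ≤ t) (ht1 : t < 1) {v : ℝ} (hv : v ∈ Icc (0 : ℝ) 1) :
    0 < 1 - t * v := by
  nlinarith [hv.1, hv.2]

lemma intervalIntegrable_pow_mul_one_sub_mul_rpow (ht0 : 0 ≤ t) (ht1 : t < 1) (m : ℕ)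
    (p : ℝ) : IntervalIntegrable (fun v => (1 - v) ^ m * (1 - t * v) ^ p) volume 0 1 := by
  refine ContinuousOn.intervalIntegrable (ContinuousOn.mul (by fun_prop) ?_)
  rw [uIcc_of_le zero_le_one]
  exact ContinuousOn.rpow_const (by fun_prop) fun v hv => Or.inl (one_sub_mul_pos_s9 ht0 ht1 hv).ne'

/-- Integration by parts against `v ↦ -(1 - v) ^ n`; the boundary term at `v = 1` vanishes
unless `n = 0`. -/
lemma remainderKernel_recurrence (δ : ℝ) (n : ℕ) (ht0 : 0 ≤ t) (ht1 : t < 1) :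
    n * remainderKernel δ n t + (δ - n) * t * remainderKernel δ (n + 1) t
      = 1 - 0 ^ n * (1 - t) ^ (δ - n) := by
  have hderiv : ∀ v ∈ uIcc (0 : ℝ) 1,
      HasDerivAt (fun v => -((1 - v) ^ n * (1 - t * v) ^ (δ - n)))
        (n * ((1 - v) ^ (n - 1) * (1 - t * v) ^ (δ - n))
          + (δ - n) * t * ((1 - v) ^ (n + 1 - 1) * (1 - t * v) ^ (δ - (n + 1 : ℕ)))) v := by
    intro v hv
    rw [uIcc_of_le zero_le_one] at hv
    have hpow := ((hasDerivAt_id v).const_sub 1).pow n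
    have hrpow := (((hasDerivAt_id v).const_mul t).const_sub 1).rpow_const (p := δ - n)
      (Or.inl (one_sub_mul_pos_s9 ht0 ht1 hv).ne')
    refine (hpow.mul hrpow).neg.congr_deriv ?_
    rw [Nat.add_sub_cancel, Nat.cast_succ, show δ - (n + 1) = δ - n - 1 by ring]
    simp only [id, Pi.pow_apply]
    ring
  have hint (m : ℕ) (p c : ℝ) :
      IntervalIntegrable (fun v => c * ((1 - v) ^ m * (1 - t * v) ^ p)) volume 0 1 :=
    (intervalIntegrable_pow_mul_one_sub_mul_rpow ht0 ht1 m p).const_mul c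
  rw [remainderKernel, remainderKernel, ← intervalIntegral.integral_const_mul,
    ← intervalIntegral.integral_const_mul, ← intervalIntegral.integral_add (hint ..) (hint ..),
    integral_eq_sub_of_hasDerivAt hderiv ((hint ..).add (hint ..))]
  simp only [sub_self, mul_one, sub_zero, one_pow, mul_zero, one_rpow, sub_neg_eq_add]
  ring

theorem one_sub_rpow_eq_sum_add_remainder (δ : ℝ) {n : ℕ} (hn : 1 ≤ n) (ht0 : 0 ≤ t)
    (ht1 : t < 1) :
    (1 - t) ^ δ = ∑ k ∈ Finset.range n, oneSubRpowCoeff δ k * t ^ k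
      + n * oneSubRpowCoeff δ n * t ^ n * remainderKernel δ n t := by
  induction n, hn using Nat.le_induction with
  | base =>
    have hK := remainderKernel_recurrence δ 0 ht0 ht1
    have hc := succ_mul_oneSubRpowCoeff_succ δ 0
    simp only [CharP.cast_eq_zero, Nat.cast_one, zero_mul, zero_add, zero_sub, sub_zero, mul_one,
      one_mul, pow_zero, pow_one, Finset.range_one, Finset.sum_singleton,
      oneSubRpowCoeff_zero] at hK hc ⊢
    linear_combination hK - t * remainderKernel δ 1 t * hc
  | succ n hn ih =>
    have hK := remainderKernel_recurrence δ n ht0 ht1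
    rw [zero_pow (by omega), zero_mul, sub_zero] at hK
    have hc := succ_mul_oneSubRpowCoeff_succ δ n
    rw [Finset.sum_range_succ, ih]
    push_cast
    linear_combination oneSubRpowCoeff δ n * t ^ n * hK
      - t ^ (n + 1) * remainderKernel δ (n + 1) t * hc

lemma remainderKernel_zero {δ : ℝ} {n : ℕ} (hn : 1 ≤ n) : remainderKernel δ n 0 = 1 / n := by
  have h := remainderKernel_recurrence δ n le_rfl zero_lt_one
  rw [zero_pow (by omega)] at h
  field_simp
  linear_combination h

lemma one_sub_pow_mul_one_sub_rpow {δ v : ℝ} {n : ℕ} (hn : 1 ≤ n) (hv : v < 1) :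
    (1 - v) ^ (n - 1) * (1 - v) ^ (δ - n) = (1 - v) ^ (δ - 1) := by
  rw [← rpow_natCast, ← rpow_add (by linarith), Nat.cast_sub hn]
  ring_nf

lemma integral_one_sub_rpow_sub_one {δ : ℝ} (hδ : 0 < δ) :
    ∫ v in (0 : ℝ)..1, (1 - v) ^ (δ - 1) = 1 / δ := by
  rw [intervalIntegral.integral_comp_sub_left (fun v => v ^ (δ - 1)),
    integral_rpow (by simp [hδ])]
  simp [zero_rpow hδ.ne']

lemma remainderKernel_mem_uIcc {δ : ℝ} (hδ : 0 < δ) {n : ℕ} (hn : 1 ≤ n) (ht0 : 0 ≤ t)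
    (ht1 : t < 1) : remainderKernel δ n t ∈ uIcc (1 / (n : ℝ)) (1 / δ) := by
  rw [← remainderKernel_zero hn, ← integral_one_sub_rpow_sub_one hδ]
  have hK0 := intervalIntegrable_pow_mul_one_sub_mul_rpow le_rfl zero_lt_one (n - 1) (δ - n)
  have hKt := intervalIntegrable_pow_mul_one_sub_mul_rpow ht0 ht1 (n - 1) (δ - n)
  have hK1 : IntervalIntegrable (fun v : ℝ => (1 - v) ^ (δ - 1)) volume 0 1 := by
    simpa using ((intervalIntegrable_rpow' (a := 0) (b := 1)
      (by linarith : -1 < δ - 1)).comp_sub_left 1).symm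
  have hbase {v : ℝ} (hv : v ∈ Ioo (0 : ℝ) 1) :
      0 < 1 - v ∧ 1 - v ≤ 1 - t * v ∧ 1 - t * v ≤ 1 :=
    ⟨by linarith [hv.2], by nlinarith [hv.1], by nlinarith [hv.1]⟩
  rcases le_total δ n with h | h
  · have hp : δ - n ≤ 0 := by linarith
    refine mem_uIcc_of_le (integral_mono_on_of_le_Ioo zero_le_one hK0 hKt fun v hv => ?_)
      (integral_mono_on_of_le_Ioo zero_le_one hKt hK1 fun v hv => ?_) <;>
      obtain ⟨h1, h2, h3⟩ := hbase hv
    · simpa using mul_le_mul_of_nonneg_left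
        (one_le_rpow_of_pos_of_le_one_of_nonpos (h1.trans_le h2) h3 hp) (pow_nonneg h1.le (n - 1))
    · rw [← one_sub_pow_mul_one_sub_rpow hn hv.2]
      exact mul_le_mul_of_nonneg_left (rpow_le_rpow_of_nonpos h1 h2 hp) (pow_nonneg h1.le _)
  · have hp : 0 ≤ δ - n := by linarith
    refine mem_uIcc_of_ge (integral_mono_on_of_le_Ioo zero_le_one hK1 hKt fun v hv => ?_)
      (integral_mono_on_of_le_Ioo zero_le_one hKt hK0 fun v hv => ?_) <;>
      obtain ⟨h1, h2, h3⟩ := hbase hv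
    · rw [← one_sub_pow_mul_one_sub_rpow hn hv.2]
      exact mul_le_mul_of_nonneg_left (rpow_le_rpow h1.le h2 hp) (pow_nonneg h1.le _)
    · simpa using mul_le_mul_of_nonneg_left
        (rpow_le_one (h1.trans_le h2).le h3 hp) (pow_nonneg h1.le (n - 1))

lemma mul_remainderKernel_mem_uIcc {δ : ℝ} (hδ : 0 ≤ δ) {n : ℕ} (hn : 1 ≤ n) (ht0 : 0 ≤ t)
    (ht1 : t < 1) : δ * remainderKernel δ n t ∈ uIcc (δ / n) 1 := by
  rcases hδ.eq_or_lt with rfl | hδ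
  · simp
  have h := mem_image_of_mem (δ * ·) (remainderKernel_mem_uIcc hδ hn ht0 ht1)
  rwa [image_const_mul_uIcc, mul_one_div, mul_one_div_cancel hδ.ne'] at h

theorem one_sub_rpow_sub_sum_mem_uIcc {δ : ℝ} (hδ : 0 ≤ δ) {n : ℕ} (hn : 1 ≤ n) (ht0 : 0 ≤ t)
    (ht1 : t < 1) :
    (1 - t) ^ δ - ∑ k ∈ Finset.range n, oneSubRpowCoeff δ k * t ^ k
      ∈ uIcc (oneSubRpowCoeff δ n * t ^ n)
        (-(poch (1 - δ) (n - 1) / (n - 1).factorial) * t ^ n) := by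
  obtain ⟨m, rfl⟩ : ∃ m, n = m + 1 := ⟨n - 1, by omega⟩
  set A := -(poch (1 - δ) (m + 1 - 1) / (m + 1 - 1).factorial)
  have hcoeff : ((m : ℝ) + 1) * oneSubRpowCoeff δ (m + 1) = δ * A := by
    simp only [A, Nat.add_sub_cancel, succ_mul_oneSubRpowCoeff_succ_eq_neg_mul]
    ring
  have hrem : (1 - t) ^ δ - ∑ k ∈ Finset.range (m + 1), oneSubRpowCoeff δ k * t ^ k
      = δ * remainderKernel δ (m + 1) t * (A * t ^ (m + 1)) := by
    rw [one_sub_rpow_eq_sum_add_remainder δ hn ht0 ht1]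
    push_cast
    linear_combination t ^ (m + 1) * remainderKernel δ (m + 1) t * hcoeff
  have hlead : oneSubRpowCoeff δ (m + 1) * t ^ (m + 1) = δ / ↑(m + 1) * (A * t ^ (m + 1)) := by
    push_cast
    field_simp
    linear_combination t ^ (m + 1) * hcoeff
  have h := mem_image_of_mem (· * (A * t ^ (m + 1)))
    (mul_remainderKernel_mem_uIcc hδ hn ht0 ht1)
  rwa [image_mul_const_uIcc, one_mul, ← hrem, ← hlead] at h

end RemainderKernel

noncomputable def kummerWeight (α x t : ℝ) : ℝ := t ^ (α - 1) * exp (-(x * t))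

section KummerWeight

variable {α x : ℝ}

lemma kummerWeight_nonneg {t : ℝ} (ht : 0 ≤ t) : 0 ≤ kummerWeight α x t :=
  mul_nonneg (rpow_nonneg ht _) (exp_pos _).le

lemma intervalIntegrable_kummerWeight (hα : 0 < α) :
    IntervalIntegrable (kummerWeight α x) volume 0 1 :=
  (intervalIntegrable_rpow' (by linarith)).mul_continuousOn (by fun_prop)

lemma NKummer_eq_integral (δ : ℝ) :
    NKummer α δ x = ∫ t in (0 : ℝ)..1, (1 - t) ^ δ * kummerWeight α x t := by
  simp only [NKummer, kummerWeight]
  congr 1 with t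
  ring

lemma integral_rpow_mul_exp_neg_mul (hx : 0 < x) (ν : ℝ) :
    ∫ t in (0 : ℝ)..1, t ^ (ν - 1) * exp (-(x * t)) = lincGamma ν x / x ^ ν := by
  have hsub := intervalIntegral.integral_comp_mul_left (fun s => s ^ (ν - 1) * exp (-s)) hx.ne'
    (a := 0) (b := 1)
  have hscale : ∀ t ∈ uIcc (0 : ℝ) 1,
      (x * t) ^ (ν - 1) * exp (-(x * t)) = x ^ (ν - 1) * (t ^ (ν - 1) * exp (-(x * t))) := by
    intro t ht
    rw [uIcc_of_le zero_le_one] at ht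
    rw [mul_rpow hx.le ht.1, mul_assoc]
  rw [integral_congr hscale, intervalIntegral.integral_const_mul, mul_zero, mul_one,
    smul_eq_mul, rpow_sub_one hx.ne', div_mul_eq_mul_div, inv_mul_eq_div,
    div_left_inj' hx.ne'] at hsub
  rw [lincGamma, ← hsub, mul_div_cancel_left₀ _ (rpow_pos_of_pos hx ν).ne']

lemma integral_pow_mul_kummerWeight (hx : 0 < x) (k : ℕ) :
    ∫ t in (0 : ℝ)..1, t ^ k * kummerWeight α x t = lincGamma (α + k) x / x ^ (α + k) := by
  rw [← integral_rpow_mul_exp_neg_mul hx]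
  refine integral_congr_uIoo fun t ht => ?_
  rw [uIoo_of_le zero_le_one] at ht
  rw [kummerWeight, ← mul_assoc, ← rpow_natCast, ← rpow_add ht.1]
  ring_nf

lemma integral_sum_add_mul_pow_mul_kummerWeight (hα : 0 < α) (hx : 0 < x) (a : ℕ → ℝ) (n : ℕ)
    (q : ℝ) :
    ∫ t in (0 : ℝ)..1, (∑ k ∈ Finset.range n, a k * t ^ k + q * t ^ n) * kummerWeight α x t
      = ∑ k ∈ Finset.range n, a k * (lincGamma (α + k) x / x ^ (α + k))
        + q * (lincGamma (α + n) x / x ^ (α + n)) := by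
  have hmoment (k : ℕ) (c : ℝ) :
      IntervalIntegrable (fun t => c * (t ^ k * kummerWeight α x t)) volume 0 1 :=
    ((intervalIntegrable_kummerWeight hα).continuousOn_mul (by fun_prop)).const_mul c
  have hsum : IntervalIntegrable
      (fun t => ∑ k ∈ Finset.range n, a k * (t ^ k * kummerWeight α x t)) volume 0 1 := by
    simpa only [Finset.sum_fn] using
      IntervalIntegrable.sum (Finset.range n) fun k _ => hmoment k (a k)
  simp only [add_mul, Finset.sum_mul, mul_assoc]
  rw [intervalIntegral.integral_add hsum (hmoment n q),
    intervalIntegral.integral_finsetSum fun k _ => hmoment k _]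
  simp only [intervalIntegral.integral_const_mul, integral_pow_mul_kummerWeight hx]

end KummerWeight

theorem kummer_gamma_bounds_nonneg_delta
    (δ : ℝ) (hδ : 0 ≤ δ) (α : ℝ) (hα : 0 < α) (n : ℕ) (hn : 1 ≤ n)
    (x : ℝ) (hx : 0 < x) :
    (∑ k ∈ Finset.range n,
        poch (-δ) k / (k.factorial : ℝ) * (lincGamma (α + k) x / x ^ (α + (k:ℝ)))) +
      min (poch (-δ) n / (n.factorial : ℝ))
          (-(poch (1 - δ) (n - 1) / ((n - 1).factorial : ℝ))) *
        (lincGamma (α + n) x / x ^ (α + (n:ℝ)))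
      ≤ NKummer α δ x ∧
    NKummer α δ x ≤
      (∑ k ∈ Finset.range n,
        poch (-δ) k / (k.factorial : ℝ) * (lincGamma (α + k) x / x ^ (α + (k:ℝ)))) +
      max (poch (-δ) n / (n.factorial : ℝ))
          (-(poch (1 - δ) (n - 1) / ((n - 1).factorial : ℝ))) *
        (lincGamma (α + n) x / x ^ (α + (n:ℝ))) := by
  have hw := intervalIntegrable_kummerWeight (x := x) hα
  have hpoly (q : ℝ) : IntervalIntegrable (fun t => (∑ k ∈ Finset.range n,
      oneSubRpowCoeff δ k * t ^ k + q * t ^ n) * kummerWeight α x t) volume 0 1 :=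
    hw.continuousOn_mul (by fun_prop)
  have hf : IntervalIntegrable (fun t => (1 - t) ^ δ * kummerWeight α x t) volume 0 1 :=
    hw.continuousOn_mul ((continuous_const.sub continuous_id).continuousOn.rpow_const
      fun _ _ => Or.inr hδ)
  rw [NKummer_eq_integral, ← integral_sum_add_mul_pow_mul_kummerWeight hα hx,
    ← integral_sum_add_mul_pow_mul_kummerWeight hα hx]
  constructor
  · refine integral_mono_on_of_le_Ioo zero_le_one (hpoly _) hf fun t ht =>
      mul_le_mul_of_nonneg_right ?_ (kummerWeight_nonneg ht.1.le)
    have h := (one_sub_rpow_sub_sum_mem_uIcc hδ hn ht.1.le ht.2).1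
    rw [← min_mul_of_nonneg _ _ (pow_nonneg ht.1.le n)] at h
    exact le_sub_iff_add_le'.mp h
  · refine integral_mono_on_of_le_Ioo zero_le_one hf (hpoly _) fun t ht =>
      mul_le_mul_of_nonneg_right ?_ (kummerWeight_nonneg ht.1.le)
    have h := (one_sub_rpow_sub_sum_mem_uIcc hδ hn ht.1.le ht.2).2
    rw [← max_mul_of_nonneg _ _ (pow_nonneg ht.1.le n)] at h
    exact sub_le_iff_le_add'.mp h
end

section
/- For all σ ∈ (0,∞), μ ∈ (0,∞) and x ∈ (0,∞), one has 0 ≤ γ(μ+σ,x)/x^μ ≤ σ^σ e^{-σ} / μ. -/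
open MeasureTheory Real Filter

lemma rpow_mul_exp_le (σ : ℝ) (hσ : 0 < σ) {s : ℝ} (hs : 0 ≤ s) :
    s ^ σ * Real.exp (-s) ≤ σ ^ σ * Real.exp (-σ) := by
  rcases eq_or_lt_of_le hs with h | h
  · rw [← h, Real.zero_rpow hσ.ne', zero_mul]
    positivity
  · rw [Real.rpow_def_of_pos h, Real.rpow_def_of_pos hσ, ← Real.exp_add, ← Real.exp_add]
    apply Real.exp_le_exp.2
    have hlog : Real.log (s / σ) ≤ s / σ - 1 :=
      Real.log_le_sub_one_of_pos (by positivity)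
    rw [Real.log_div h.ne' hσ.ne'] at hlog
    have h2 : σ * (s / σ - 1) = s - σ := by field_simp
    nlinarith [mul_le_mul_of_nonneg_left hlog hσ.le]

theorem lincGamma_div_rpow_le
    (σ μ x : ℝ) (hσ : 0 < σ) (hμ : 0 < μ) (hx : 0 < x) :
    0 ≤ lincGamma (μ + σ) x / x ^ μ ∧
    lincGamma (μ + σ) x / x ^ μ ≤ σ ^ σ * Real.exp (-σ) / μ := by
  set C := σ ^ σ * Real.exp (-σ) with hC
  have hCpos : 0 < C := by positivity
  -- integrability of the comparison function
  have hg : IntervalIntegrable (fun s : ℝ => C * s ^ (μ - 1)) volume 0 x :=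
    (intervalIntegral.intervalIntegrable_rpow' (by linarith)).const_mul C
  -- pointwise bound on [0, x]
  have hbound : ∀ s ∈ Set.Ioc (0:ℝ) x,
      s ^ (μ + σ - 1) * Real.exp (-s) ≤ C * s ^ (μ - 1) := by
    intro s hs
    have h : (0:ℝ) < s := hs.1
    have hs0 : (0:ℝ) ≤ s := h.le
    · have : s ^ (μ + σ - 1) = s ^ (μ - 1) * s ^ σ := by
        rw [← Real.rpow_add h]; ring_nf
      rw [this]
      calc s ^ (μ - 1) * s ^ σ * Real.exp (-s)
          = (s ^ σ * Real.exp (-s)) * s ^ (μ - 1) := by ring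
        _ ≤ C * s ^ (μ - 1) := by
            apply mul_le_mul_of_nonneg_right (rpow_mul_exp_le σ hσ hs0)
            positivity
  -- integrability of the integrand
  have hf : IntervalIntegrable (fun s : ℝ => s ^ (μ + σ - 1) * Real.exp (-s)) volume 0 x := by
    apply hg.mono_fun
    · apply Measurable.aestronglyMeasurable
      fun_prop
    · rw [Filter.EventuallyLE, ae_restrict_iff' measurableSet_uIoc]
      filter_upwards with s hs
      have hs' : s ∈ Set.Ioc (0:ℝ) x := by
        rwa [Set.uIoc_of_le hx.le] at hs
      have h1 : 0 ≤ s ^ (μ + σ - 1) * Real.exp (-s) := by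
        have := hs'.1.le; positivity
      have h2 : 0 ≤ C * s ^ (μ - 1) := by
        have := hs'.1.le; positivity
      rw [Real.norm_of_nonneg h1, Real.norm_of_nonneg h2]
      exact hbound s hs'
  have hnn : 0 ≤ lincGamma (μ + σ) x := by
    apply intervalIntegral.integral_nonneg hx.le
    intro s hs
    have := hs.1; positivity
  have hle : lincGamma (μ + σ) x ≤ C * (x ^ μ / μ) := by
    have hae : (fun s : ℝ => s ^ (μ + σ - 1) * Real.exp (-s))
        ≤ᵐ[volume.restrict (Set.Icc 0 x)] (fun s : ℝ => C * s ^ (μ - 1)) := by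
      have h0 : ∀ᵐ s : ℝ ∂volume, s ≠ 0 := by
        rw [ae_iff]
        simpa using measure_singleton (0:ℝ)
      rw [Filter.EventuallyLE, ae_restrict_iff' measurableSet_Icc]
      filter_upwards [h0] with s hs0 hs
      exact hbound s ⟨lt_of_le_of_ne hs.1 (Ne.symm hs0), hs.2⟩
    have := intervalIntegral.integral_mono_ae_restrict hx.le hf hg hae
    rw [lincGamma]
    refine this.trans ?_
    rw [intervalIntegral.integral_const_mul]
    rw [integral_rpow (Or.inl (by linarith)), show μ - 1 + 1 = μ by ring,
      Real.zero_rpow hμ.ne', sub_zero]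
  constructor
  · exact div_nonneg hnn (by positivity)
  · rw [div_le_div_iff₀ (by positivity) hμ]
    calc lincGamma (μ + σ) x * μ ≤ C * (x ^ μ / μ) * μ := by
          exact mul_le_mul_of_nonneg_right hle hμ.le
      _ = C * x ^ μ := by field_simp
end

section
/- For all σ ∈ [0,∞) and ν ∈ (σ,∞), one has sup_{x ∈ (0,∞)} x^σ · γ(ν,x)/x^{ν} ≤ σ^σ e^{-σ} / (ν − σ), where σ^σ := 1 when σ = 0. -/
open MeasureTheory Real Filter

lemma pow_exp_le (σ : ℝ) (hσ : 0 ≤ σ) {s : ℝ} (hs : 0 < s) :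
    s ^ σ * Real.exp (-s) ≤ σ ^ σ * Real.exp (-σ) := by
  rcases eq_or_lt_of_le hσ with h | h
  · simp only [← h, Real.rpow_zero, one_mul, neg_zero, Real.exp_zero]
    exact Real.exp_le_one_iff.mpr (by linarith)
  · rw [Real.rpow_def_of_pos hs, Real.rpow_def_of_pos h, ← Real.exp_add, ← Real.exp_add]
    apply Real.exp_le_exp.mpr
    have hlog := Real.log_le_sub_one_of_pos (div_pos hs h)
    rw [Real.log_div hs.ne' h.ne'] at hlog
    have h2 : σ * (Real.log s - Real.log σ) ≤ σ * (s / σ - 1) :=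
      mul_le_mul_of_nonneg_left hlog h.le
    have h3 : σ * (s / σ - 1) = s - σ := by field_simp
    nlinarith [h2, h3]

theorem lincGamma_weighted_sup_le
    (σ ν : ℝ) (hσ : 0 ≤ σ) (hν : σ < ν) :
    sSup ((fun x : ℝ => x ^ σ * (lincGamma ν x / x ^ ν)) '' Set.Ioi 0)
      ≤ σ ^ σ * Real.exp (-σ) / (ν - σ) := by
  have hνσ : 0 < ν - σ := sub_pos.mpr hν
  have hC : 0 ≤ σ ^ σ * Real.exp (-σ) :=
    mul_nonneg (Real.rpow_nonneg hσ _) (Real.exp_nonneg _)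
  apply Real.sSup_le _ (div_nonneg hC hνσ.le)
  rintro _ ⟨x, hx, rfl⟩
  replace hx : 0 < x := hx
  have hxν : 0 < x ^ ν := Real.rpow_pos_of_pos hx ν
  have hxνσ : 0 < x ^ (ν - σ) := Real.rpow_pos_of_pos hx _
  -- integrability
  have hr : (-1 : ℝ) < ν - σ - 1 := by linarith
  have hint2 : IntervalIntegrable (fun s : ℝ => σ ^ σ * Real.exp (-σ) * s ^ (ν - σ - 1))
      volume 0 x := (intervalIntegral.intervalIntegrable_rpow' hr).const_mul _
  have hint1 : IntervalIntegrable (fun s : ℝ => s ^ (ν - 1) * Real.exp (-s)) volume 0 x := by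
    have h1 : IntervalIntegrable (fun s : ℝ => s ^ (ν - 1)) volume 0 x :=
      intervalIntegral.intervalIntegrable_rpow' (by linarith)
    exact h1.mul_continuousOn (Continuous.continuousOn (by continuity))
  -- a.e. pointwise bound on the interval
  have h0 : ∀ᵐ s : ℝ ∂volume, s ≠ 0 := by
    refine ae_iff.mpr ?_
    convert measure_singleton (0 : ℝ) using 2
    · ext s; simp
    · infer_instance
  have hae : ∀ᵐ s ∂(volume.restrict (Set.Icc (0:ℝ) x)),
      s ^ (ν - 1) * Real.exp (-s) ≤ σ ^ σ * Real.exp (-σ) * s ^ (ν - σ - 1) := by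
    filter_upwards [ae_restrict_of_ae h0, ae_restrict_mem measurableSet_Icc] with s hs0 hs
    have hspos : 0 < s := lt_of_le_of_ne hs.1 (Ne.symm hs0)
    calc s ^ (ν - 1) * Real.exp (-s)
        = s ^ (ν - σ - 1) * (s ^ σ * Real.exp (-s)) := by
          rw [show ν - 1 = (ν - σ - 1) + σ by ring, Real.rpow_add hspos, mul_assoc]
      _ ≤ s ^ (ν - σ - 1) * (σ ^ σ * Real.exp (-σ)) :=
          mul_le_mul_of_nonneg_left (pow_exp_le σ hσ hspos)
            (Real.rpow_nonneg hspos.le _)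
      _ = σ ^ σ * Real.exp (-σ) * s ^ (ν - σ - 1) := mul_comm _ _
  have hmono := intervalIntegral.integral_mono_ae_restrict hx.le hint1 hint2 hae
  have hrpow : (∫ s in (0:ℝ)..x, σ ^ σ * Real.exp (-σ) * s ^ (ν - σ - 1))
      = σ ^ σ * Real.exp (-σ) * (x ^ (ν - σ) / (ν - σ)) := by
    rw [intervalIntegral.integral_const_mul, integral_rpow (Or.inl hr)]
    rw [show ν - σ - 1 + 1 = ν - σ by ring, Real.zero_rpow hνσ.ne']
    ring
  have hγ : lincGamma ν x ≤ σ ^ σ * Real.exp (-σ) * (x ^ (ν - σ) / (ν - σ)) := by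
    rw [← hrpow]; exact hmono
  have hsplit : x ^ ν = x ^ σ * x ^ (ν - σ) := by
    rw [← Real.rpow_add hx]; ring_nf
  show x ^ σ * (lincGamma ν x / x ^ ν) ≤ _
  calc x ^ σ * (lincGamma ν x / x ^ ν)
      ≤ x ^ σ * (σ ^ σ * Real.exp (-σ) * (x ^ (ν - σ) / (ν - σ)) / x ^ ν) := by
        apply mul_le_mul_of_nonneg_left _ (Real.rpow_nonneg hx.le _)
        exact div_le_div_of_nonneg_right hγ hxν.le
    _ = σ ^ σ * Real.exp (-σ) / (ν - σ) := by
        rw [hsplit]; field_simp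
end

section
/- Let α ∈ (0,∞), δ ∈ (-1,∞) and σ ∈ [0,α]. Then sup_{x ∈ (0,∞)} x^σ |N(α,δ,x) − ∑_{k=0}^{n-1} ((-δ)_k / k!) γ(α+k,x)/x^{α+k}| → 0 as n → ∞; i.e., the partial sums of the incomplete-Gamma expansion converge to N(α,δ,·) uniformly in the weighted sup norm ‖f‖_σ := sup_{x ∈ (0,∞)} x^σ |f(x)|. -/
open MeasureTheory Real Filter

/-!
Write `(1 - t) ^ δ = ∑_{k<n} c_k t ^ k + R_n(t)` with `c_k = (-δ)_k / k!`. The substitution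
`s = x t` turns the `n`-th error into `∫₀¹ t ^ (α-1) R_n(t) e^(-xt) dt`, and
`x ^ σ e^(-xt) ≤ C t ^ (-σ)` bounds its weighted sup norm by `C ∫₀¹ t ^ (α-σ-1) |R_n(t)| dt`.
The integral form `R_n(t) = n c_n (1-t) ^ δ ∫₀ᵗ s ^ (n-1) (1-s) ^ (-δ-1) ds` gives `R_n → 0`
pointwise, and shows that for `n ≥ N ≥ δ` all `R_n` have the sign of `c_N`, so that
`|R_n| ≤ |R_N| ≤ K t (1 + (1-t) ^ δ)`. The factor `t` absorbs `t ^ (α-σ-1)` even for `σ = α`,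
and dominated convergence concludes.
-/

open Set Topology

lemma exists_eq_mul_of_ratio_mem_Icc {a r : ℕ → ℝ} {N n : ℕ}
    (ha : ∀ k ≥ N, a (k + 1) = a k * r k) (hr : ∀ k ≥ N, r k ∈ Icc (0 : ℝ) 1) (hn : N ≤ n) :
    ∃ s ∈ Icc (0 : ℝ) 1, a n = a N * s := by
  induction n, hn using Nat.le_induction with
  | base => exact ⟨1, right_mem_Icc.2 zero_le_one, (mul_one _).symm⟩
  | succ n hn ih =>
    obtain ⟨s, ⟨hs₀, hs₁⟩, hs⟩ := ih
    obtain ⟨hr₀, hr₁⟩ := hr n hn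
    exact ⟨s * r n, ⟨mul_nonneg hs₀ hr₀, mul_le_one₀ hs₁ hr₀ hr₁⟩, by rw [ha n hn, hs, mul_assoc]⟩

lemma abs_le_abs_of_mul_sign {ε x y : ℝ} (hε : |ε| = 1) (hx : 0 ≤ ε * x) (hxy : ε * x ≤ ε * y) :
    |x| ≤ |y| :=
  calc |x| = ε * x := by rw [← abs_of_nonneg hx, abs_mul, hε, one_mul]
    _ ≤ |ε * y| := hxy.trans (le_abs_self _)
    _ = |y| := by rw [abs_mul, hε, one_mul]

lemma lt_one_of_mem_uIcc {s t : ℝ} (ht : t < 1) (hs : s ∈ uIcc 0 t) : s < 1 :=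
  hs.2.trans_lt (max_lt one_pos ht)

lemma continuousOn_one_sub_rpow_uIcc {q t : ℝ} (ht : t < 1) :
    ContinuousOn (fun s : ℝ => (1 - s) ^ q) (uIcc 0 t) :=
  (continuousOn_const.sub continuousOn_id).rpow_const fun _ hs =>
    Or.inl (sub_ne_zero.2 (lt_one_of_mem_uIcc ht hs).ne')

lemma hasDerivAt_one_sub_rpow (q : ℝ) {s : ℝ} (hs : s < 1) :
    HasDerivAt (fun u : ℝ => (1 - u) ^ q) (-q * (1 - s) ^ (q - 1)) s := by
  simpa using ((hasDerivAt_id s).const_sub 1).rpow_const (p := q) (Or.inl (sub_ne_zero.2 hs.ne'))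

lemma rpow_le_max_one_half_rpow {b : ℝ} (q : ℝ) (hb₀ : 1 / 2 ≤ b) (hb₁ : b ≤ 1) :
    b ^ q ≤ max 1 ((1 / 2) ^ q) := by
  rcases le_or_gt 0 q with hq | hq
  · exact le_max_of_le_left (Real.rpow_le_one (by linarith) hb₁ hq)
  · exact le_max_of_le_right (Real.rpow_le_rpow_of_nonpos (by norm_num) hb₀ hq.le)

lemma integrableOn_one_sub_rpow {q : ℝ} (hq : -1 < q) :
    IntegrableOn (fun t : ℝ => (1 - t) ^ q) (Ioo 0 1) := by
  have h := ((intervalIntegral.intervalIntegrable_rpow' hq (a := 0) (b := 1)).comp_sub_left 1).symm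
  norm_num at h
  exact (intervalIntegrable_iff_integrableOn_Ioo_of_le zero_le_one).1 h

lemma integrableOn_rpow_mul_one_sub_rpow {p q : ℝ} (hp : -1 < p) (hq : -1 < q) :
    IntegrableOn (fun t : ℝ => t ^ p * (1 - t) ^ q) (Ioo 0 1) := by
  refine ((((intervalIntegral.integrableOn_Ioo_rpow_iff one_pos).2 hp).const_mul
    (max 1 ((1 / 2 : ℝ) ^ q))).add ((integrableOn_one_sub_rpow hq).const_mul
    (max 1 ((1 / 2 : ℝ) ^ p)))).mono' (by fun_prop : Measurable _).aestronglyMeasurable ?_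
  refine (ae_restrict_iff' measurableSet_Ioo).2 (Eventually.of_forall fun t ⟨ht₀, ht₁⟩ => ?_)
  have hp' := Real.rpow_nonneg ht₀.le p
  have hq' := Real.rpow_nonneg (sub_nonneg.2 ht₁.le) q
  have hA : 0 ≤ max 1 ((1 / 2 : ℝ) ^ q) := le_max_of_le_left zero_le_one
  have hB : 0 ≤ max 1 ((1 / 2 : ℝ) ^ p) := le_max_of_le_left zero_le_one
  rw [norm_mul, Real.norm_of_nonneg hp', Real.norm_of_nonneg hq', Pi.add_apply]
  rcases le_total t (1 / 2) with h | h
  · nlinarith [rpow_le_max_one_half_rpow q (by linarith : 1 / 2 ≤ 1 - t) (by linarith)]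
  · nlinarith [rpow_le_max_one_half_rpow p h ht₁.le]

lemma IntegrableOn.mul_exp_neg_mul {f : ℝ → ℝ} (hf : IntegrableOn f (Ioo 0 1)) {x : ℝ}
    (hx : 0 ≤ x) : IntegrableOn (fun t => f t * exp (-(x * t))) (Ioo 0 1) :=
  hf.mul_bdd (c := 1) (by fun_prop : Measurable _).aestronglyMeasurable <|
    (ae_restrict_iff' measurableSet_Ioo).2 <| Eventually.of_forall fun t ht => by
      rw [Real.norm_of_nonneg (exp_nonneg _), exp_le_one_iff, neg_nonpos]
      exact mul_nonneg hx ht.1.le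

lemma exists_rpow_mul_exp_neg_le {σ : ℝ} (hσ : 0 ≤ σ) :
    ∃ C, ∀ y, 0 ≤ y → y ^ σ * exp (-y) ≤ C := by
  set m := ⌈σ⌉₊
  refine ⟨1 + m.factorial, fun y hy => ?_⟩
  have hpow : y ^ σ ≤ 1 + y ^ m := by
    rcases le_total y 1 with h | h
    · linarith [Real.rpow_le_one hy h hσ, pow_nonneg hy m]
    · rw [← Real.rpow_natCast]
      linarith [Real.rpow_le_rpow_of_exponent_le h (Nat.le_ceil σ)]
  have hfac : y ^ m ≤ m.factorial * exp y := by
    have := Real.pow_div_factorial_le_exp y hy m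
    rwa [div_le_iff₀ (by positivity), mul_comm] at this
  calc y ^ σ * exp (-y) ≤ (1 + m.factorial * exp y) * exp (-y) := by gcongr; linarith
    _ = exp (-y) + m.factorial := by rw [add_mul, mul_assoc, ← exp_add]; simp
    _ ≤ 1 + m.factorial := by gcongr; exact exp_le_one_iff.2 (by linarith)

/-- `x ^ σ e^{-xt} = t ^ (-σ) (xt) ^ σ e^{-xt} ≤ C t ^ (-σ)`. -/
lemma rpow_mul_abs_setIntegral_le {σ C : ℝ} (hC : ∀ y, 0 ≤ y → y ^ σ * exp (-y) ≤ C) (α : ℝ)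
    {h : ℝ → ℝ} (hh : IntegrableOn (fun t => t ^ (α - σ - 1) * |h t|) (Ioo 0 1)) {x : ℝ}
    (hx : 0 < x) :
    x ^ σ * |∫ t in Ioo 0 1, t ^ (α - 1) * h t * exp (-(x * t))|
      ≤ C * ∫ t in Ioo 0 1, t ^ (α - σ - 1) * |h t| := by
  rw [← integral_const_mul]
  calc x ^ σ * |∫ t in Ioo 0 1, t ^ (α - 1) * h t * exp (-(x * t))|
      ≤ x ^ σ * ∫ t in Ioo 0 1, |t ^ (α - 1) * h t * exp (-(x * t))| := by
        gcongr
        exact abs_integral_le_integral_abs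
    _ = ∫ t in Ioo 0 1, x ^ σ * |t ^ (α - 1) * h t * exp (-(x * t))| :=
        (integral_const_mul _ _).symm
    _ ≤ _ := integral_mono_of_nonneg (Eventually.of_forall fun t => by positivity)
        (hh.const_mul C) <| (ae_restrict_iff' measurableSet_Ioo).2 <|
          Eventually.of_forall fun t ⟨ht₀, _⟩ => ?_
  have hsplit : x ^ σ * t ^ (α - 1) = (x * t) ^ σ * t ^ (α - σ - 1) := by
    rw [Real.mul_rpow hx.le ht₀.le, mul_assoc, ← Real.rpow_add ht₀]
    ring_nf
  calc x ^ σ * |t ^ (α - 1) * h t * exp (-(x * t))|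
      = (x * t) ^ σ * exp (-(x * t)) * (t ^ (α - σ - 1) * |h t|) := by
        rw [abs_mul, abs_mul, abs_of_nonneg (Real.rpow_nonneg ht₀.le _),
          abs_of_nonneg (exp_nonneg _), ← mul_assoc, ← mul_assoc, hsplit]
        ring
    _ ≤ C * (t ^ (α - σ - 1) * |h t|) := by
        gcongr
        exact hC _ (by positivity)

lemma lincGamma_div_rpow (ν : ℝ) {x : ℝ} (hx : 0 < x) :
    lincGamma ν x / x ^ ν = ∫ t in (0 : ℝ)..1, t ^ (ν - 1) * exp (-(x * t)) := by
  have h := intervalIntegral.smul_integral_comp_mul_left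
    (fun s => s ^ (ν - 1) * exp (-s)) x (a := 0) (b := 1)
  simp only [mul_zero, mul_one, smul_eq_mul] at h
  rw [intervalIntegral.integral_congr (g := fun t => x ^ (ν - 1) * (t ^ (ν - 1) * exp (-(x * t))))
    fun t ht => by
      rw [uIcc_of_le zero_le_one] at ht
      simp only [Real.mul_rpow hx.le ht.1, mul_assoc],
    intervalIntegral.integral_const_mul] at h
  rw [lincGamma, ← h, Real.rpow_sub_one hx.ne']
  field_simp

namespace OneSubRpow

/-- The Taylor coefficients of `t ↦ (1 - t) ^ δ` at `0`. -/
noncomputable def coeff (δ : ℝ) (k : ℕ) : ℝ := poch (-δ) k / k.factorial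

lemma coeff_zero (δ : ℝ) : coeff δ 0 = 1 := by simp [coeff, poch]

lemma coeff_succ (δ : ℝ) (k : ℕ) : coeff δ (k + 1) = coeff δ k * ((k - δ) / (k + 1)) := by
  simp only [coeff, poch, Nat.factorial_succ, Nat.cast_mul, Nat.cast_succ]
  field_simp
  ring

lemma exists_coeff_eq_mul {δ : ℝ} {N n : ℕ} (hδ : -1 ≤ δ) (hδN : δ ≤ N) (hNn : N ≤ n) :
    ∃ s ∈ Icc (0 : ℝ) 1, coeff δ n = coeff δ N * s := by
  refine exists_eq_mul_of_ratio_mem_Icc (fun k _ => coeff_succ δ k) (fun k hk => ?_) hNn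
  have hδk : δ ≤ k := hδN.trans (Nat.cast_le.2 hk)
  exact ⟨div_nonneg (by linarith) (by positivity), (div_le_one (by positivity)).2 (by linarith)⟩

lemma coeff_zero_left {n : ℕ} (hn : 1 ≤ n) : coeff 0 n = 0 := by
  obtain ⟨s, -, hs⟩ := exists_coeff_eq_mul (δ := 0) (N := 1) (by norm_num) (by norm_num) hn
  simp [hs, coeff_succ (0 : ℝ) 0]

noncomputable def taylorSum (δ : ℝ) (n : ℕ) (t : ℝ) : ℝ := ∑ k ∈ Finset.range n, coeff δ k * t ^ k

noncomputable def rem (δ : ℝ) (n : ℕ) (t : ℝ) : ℝ := (1 - t) ^ δ - taylorSum δ n t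

/-- The partial sums satisfy the differential equation `(1 - t) y' + δ y = 0` of `(1 - t) ^ δ`
up to the single term `-n c_n t ^ (n - 1)`. -/
lemma one_sub_mul_deriv_taylorSum_add (δ : ℝ) (n : ℕ) (t : ℝ) :
    (1 - t) * (∑ k ∈ Finset.range n, coeff δ k * (k * t ^ (k - 1))) + δ * taylorSum δ n t
      = -(n * coeff δ n * t ^ (n - 1)) := by
  induction n with
  | zero => simp [taylorSum]
  | succ n ih =>
    rw [taylorSum, Finset.sum_range_succ, Finset.sum_range_succ] at *
    have hrec : ((n : ℝ) + 1) * coeff δ (n + 1) = (n - δ) * coeff δ n := by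
      rw [coeff_succ]; field_simp
    have hpow : (n : ℝ) * t ^ (n - 1) * t = n * t ^ n := by
      cases n with
      | zero => simp
      | succ m => rw [Nat.add_sub_cancel, pow_succ]; ring
    push_cast
    linear_combination ih - coeff δ n * hpow + t ^ n * hrec

lemma hasDerivAt_taylorSum (δ : ℝ) (n : ℕ) (s : ℝ) :
    HasDerivAt (taylorSum δ n) (∑ k ∈ Finset.range n, coeff δ k * (k * s ^ (k - 1))) s :=
  HasDerivAt.fun_sum fun k _ => (hasDerivAt_pow k s).const_mul (coeff δ k)

lemma hasDerivAt_one_sub_taylorSum_mul (δ : ℝ) (n : ℕ) {s : ℝ} (hs : s < 1) :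
    HasDerivAt (fun u => 1 - taylorSum δ n u * (1 - u) ^ (-δ))
      (n * coeff δ n * (s ^ (n - 1) * (1 - s) ^ (-δ - 1))) s := by
  refine (((hasDerivAt_taylorSum δ n s).mul (hasDerivAt_one_sub_rpow (-δ) hs)).const_sub 1
    ).congr_deriv ?_
  have hpow : (1 - s) ^ (-δ) = (1 - s) ^ (-δ - 1) * (1 - s) := by
    rw [← Real.rpow_add_one (by linarith)]
    ring_nf
  rw [hpow]
  linear_combination (-(1 - s) ^ (-δ - 1)) * one_sub_mul_deriv_taylorSum_add δ n s

lemma taylorSum_zero_right {δ : ℝ} {n : ℕ} (hn : 1 ≤ n) : taylorSum δ n 0 = 1 := by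
  rw [taylorSum, Finset.sum_eq_single_of_mem 0 (Finset.mem_range.2 hn) fun k _ hk => by
    simp [zero_pow hk]]
  simp [coeff_zero]

noncomputable def remIntegral (δ : ℝ) (n : ℕ) (t : ℝ) : ℝ :=
  ∫ s in (0 : ℝ)..t, s ^ (n - 1) * (1 - s) ^ (-δ - 1)

lemma rem_eq_mul_remIntegral {δ : ℝ} {n : ℕ} (hn : 1 ≤ n) {t : ℝ} (ht : t < 1) :
    rem δ n t = n * coeff δ n * ((1 - t) ^ δ * remIntegral δ n t) := by
  have hFTC := intervalIntegral.integral_eq_sub_of_hasDerivAt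
    (fun s hs => hasDerivAt_one_sub_taylorSum_mul δ n (lt_one_of_mem_uIcc ht hs))
    (((continuous_pow _).continuousOn.mul (continuousOn_one_sub_rpow_uIcc ht)).const_mul
      _).intervalIntegrable
  rw [intervalIntegral.integral_const_mul, taylorSum_zero_right hn] at hFTC
  norm_num at hFTC
  have hinv : (1 - t) ^ δ * (1 - t) ^ (-δ) = 1 := by
    rw [← Real.rpow_add (by linarith)]; simp
  rw [remIntegral, mul_left_comm, hFTC, rem]
  linear_combination (taylorSum δ n t) * hinv

noncomputable def remMajorant (δ t : ℝ) : ℝ := (1 - t) ^ δ * ∫ s in (0 : ℝ)..t, (1 - s) ^ (-δ - 1)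

lemma remIntegral_nonneg (δ : ℝ) (n : ℕ) {t : ℝ} (ht₀ : 0 ≤ t) (ht₁ : t < 1) :
    0 ≤ remIntegral δ n t :=
  intervalIntegral.integral_nonneg ht₀ fun s hs =>
    mul_nonneg (pow_nonneg hs.1 _) (Real.rpow_nonneg (by linarith [hs.2]) _)

lemma remIntegral_le (δ : ℝ) (n : ℕ) {t : ℝ} (ht₀ : 0 ≤ t) (ht₁ : t < 1) :
    remIntegral δ n t ≤ t ^ (n - 1) * ∫ s in (0 : ℝ)..t, (1 - s) ^ (-δ - 1) := by
  rw [← intervalIntegral.integral_const_mul]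
  refine intervalIntegral.integral_mono_on ht₀
    ((continuous_pow _).continuousOn.mul (continuousOn_one_sub_rpow_uIcc ht₁)).intervalIntegrable
    ((continuousOn_one_sub_rpow_uIcc ht₁).const_mul _).intervalIntegrable fun s hs => ?_
  exact mul_le_mul_of_nonneg_right (pow_le_pow_left₀ hs.1 hs.2 _)
    (Real.rpow_nonneg (by linarith [hs.2]) _)

lemma remMajorant_nonneg (δ : ℝ) {t : ℝ} (ht₀ : 0 ≤ t) (ht₁ : t < 1) : 0 ≤ remMajorant δ t :=
  mul_nonneg (Real.rpow_nonneg (by linarith) _)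
    (intervalIntegral.integral_nonneg ht₀ fun s hs => Real.rpow_nonneg (by linarith [hs.2]) _)

lemma mul_remMajorant (δ : ℝ) {t : ℝ} (ht : t < 1) : δ * remMajorant δ t = 1 - (1 - t) ^ δ := by
  have hFTC := intervalIntegral.integral_eq_sub_of_hasDerivAt
    (fun s hs => hasDerivAt_one_sub_rpow (-δ) (lt_one_of_mem_uIcc ht hs))
    ((continuousOn_one_sub_rpow_uIcc ht).const_mul _).intervalIntegrable
  rw [intervalIntegral.integral_const_mul] at hFTC
  have hinv : (1 - t) ^ δ * (1 - t) ^ (-δ) = 1 := by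
    rw [← Real.rpow_add (by linarith)]; simp
  rw [remMajorant, mul_left_comm]
  norm_num at hFTC
  linear_combination (1 - t) ^ δ * hFTC + hinv

lemma abs_rem_le {δ : ℝ} {n : ℕ} (hn : 1 ≤ n) {t : ℝ} (ht₀ : 0 ≤ t) (ht₁ : t < 1) :
    |rem δ n t| ≤ n * |coeff δ n| * t ^ (n - 1) * remMajorant δ t := by
  have hpow : 0 ≤ (1 - t) ^ δ := Real.rpow_nonneg (by linarith) _
  rw [rem_eq_mul_remIntegral hn ht₁, abs_mul, abs_mul, Nat.abs_cast,
    abs_of_nonneg (mul_nonneg hpow (remIntegral_nonneg δ n ht₀ ht₁)), remMajorant]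
  exact (mul_le_mul_of_nonneg_left (mul_le_mul_of_nonneg_left (remIntegral_le δ n ht₀ ht₁) hpow)
    (by positivity)).trans_eq (by ring)

lemma abs_coeff_le {δ : ℝ} (hδ : -1 ≤ δ) {N n : ℕ} (hδN : δ ≤ N) (hNn : N ≤ n) :
    |coeff δ n| ≤ |coeff δ N| := by
  obtain ⟨s, ⟨hs₀, hs₁⟩, hs⟩ := exists_coeff_eq_mul hδ hδN hNn
  rw [hs, abs_mul, abs_of_nonneg hs₀]
  exact mul_le_of_le_one_right (abs_nonneg _) hs₁

/-- Beyond `N ≥ δ` the coefficients, and hence the remainders, share one sign. -/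
lemma abs_rem_le_abs_rem {δ : ℝ} (hδ : -1 ≤ δ) {N n : ℕ} (hN : 1 ≤ N) (hδN : δ ≤ N)
    (hNn : N ≤ n) {t : ℝ} (ht₀ : 0 ≤ t) (ht₁ : t < 1) : |rem δ n t| ≤ |rem δ N t| := by
  obtain ⟨ε, hε, hεc⟩ : ∃ ε : ℝ, |ε| = 1 ∧ 0 ≤ ε * coeff δ N := by
    rcases le_total 0 (coeff δ N) with h | h
    exacts [⟨1, by simp, by simpa⟩, ⟨-1, by simp, by simpa⟩]
  have hsign : ∀ k, N ≤ k → 0 ≤ ε * coeff δ k := fun k hk => by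
    obtain ⟨s, hs, hcs⟩ := exists_coeff_eq_mul hδ hδN hk
    rw [hcs, ← mul_assoc]
    exact mul_nonneg hεc hs.1
  refine abs_le_abs_of_mul_sign hε ?_ ?_
  · rw [rem_eq_mul_remIntegral (hN.trans hNn) ht₁,
      show ∀ a b c : ℝ, ε * (a * b * c) = a * (ε * b) * c by intros; ring]
    exact mul_nonneg (mul_nonneg n.cast_nonneg (hsign n hNn))
      (mul_nonneg (Real.rpow_nonneg (by linarith) _) (remIntegral_nonneg δ n ht₀ ht₁))
  · have hdiff : rem δ n t = rem δ N t - ∑ k ∈ Finset.Ico N n, coeff δ k * t ^ k := by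
      rw [rem, rem, taylorSum, taylorSum, Finset.sum_Ico_eq_sub _ hNn]
      ring
    rw [hdiff, mul_sub, sub_le_self_iff, Finset.mul_sum]
    exact Finset.sum_nonneg fun k hk => by
      rw [← mul_assoc]
      exact mul_nonneg (hsign k (Finset.mem_Ico.1 hk).1) (pow_nonneg ht₀ _)

lemma abs_rem_le_mul {δ : ℝ} (hδ : -1 ≤ δ) {N n : ℕ} (hN : 2 ≤ N) (hδN : δ ≤ N) (hNn : N ≤ n)
    {t : ℝ} (ht₀ : 0 ≤ t) (ht₁ : t < 1) :
    |rem δ n t| ≤ N * |coeff δ N / δ| * (t * (1 + (1 - t) ^ δ)) := by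
  have hcoeff : |coeff δ N| = |coeff δ N / δ| * |δ| := by
    rw [← abs_mul, div_mul_cancel_of_imp fun h => by subst h; exact coeff_zero_left (by omega)]
  have hM : |δ| * remMajorant δ t ≤ 1 + (1 - t) ^ δ := by
    rw [← abs_of_nonneg (remMajorant_nonneg δ ht₀ ht₁), ← abs_mul, mul_remMajorant δ ht₁]
    refine (abs_sub _ _).trans ?_
    rw [abs_one, abs_of_nonneg (Real.rpow_nonneg (by linarith) _)]
  have ht : t ^ (N - 1) ≤ t := pow_le_of_le_one ht₀ ht₁.le (by omega)
  calc |rem δ n t| ≤ |rem δ N t| := abs_rem_le_abs_rem hδ (by omega) hδN hNn ht₀ ht₁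
    _ ≤ N * |coeff δ N| * t ^ (N - 1) * remMajorant δ t := abs_rem_le (by omega) ht₀ ht₁
    _ = N * |coeff δ N / δ| * (t ^ (N - 1) * (|δ| * remMajorant δ t)) := by rw [hcoeff]; ring
    _ ≤ N * |coeff δ N / δ| * (t * (1 + (1 - t) ^ δ)) := by
        gcongr
        exact mul_nonneg (abs_nonneg δ) (remMajorant_nonneg δ ht₀ ht₁)

lemma tendsto_rem {δ : ℝ} (hδ : -1 ≤ δ) {t : ℝ} (ht₀ : 0 ≤ t) (ht₁ : t < 1) :
    Tendsto (fun n => rem δ n t) atTop (𝓝 0) := by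
  obtain ⟨N, hN⟩ := exists_nat_ge δ
  have hlim : Tendsto (fun n : ℕ => |coeff δ (N + 1)| * remMajorant δ t * (n * t ^ n + t ^ n))
      atTop (𝓝 0) := by
    simpa using ((tendsto_self_mul_const_pow_of_lt_one ht₀ ht₁).add
      (tendsto_pow_atTop_nhds_zero_of_lt_one ht₀ ht₁)).const_mul _
  rw [← tendsto_add_atTop_iff_nat 1]
  refine squeeze_zero_norm' ?_ hlim
  filter_upwards [eventually_ge_atTop N] with n hn
  have hc := abs_coeff_le hδ (N := N + 1) (by push_cast; linarith) (by omega : N + 1 ≤ n + 1)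
  calc ‖rem δ (n + 1) t‖ ≤ (n + 1 : ℕ) * |coeff δ (n + 1)| * t ^ n * remMajorant δ t :=
        abs_rem_le (by omega) ht₀ ht₁
    _ ≤ (n + 1 : ℕ) * |coeff δ (N + 1)| * t ^ n * remMajorant δ t := by
        gcongr
        exact remMajorant_nonneg δ ht₀ ht₁
    _ = _ := by push_cast; ring

lemma exists_eventually_norm_rpow_mul_abs_rem_le {α δ σ : ℝ} (hδ : -1 ≤ δ) (hσα : σ ≤ α) :
    ∃ K, ∀ᶠ n in atTop, ∀ t ∈ Ioo (0 : ℝ) 1,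
      ‖t ^ (α - σ - 1) * |rem δ n t|‖ ≤ K * (1 + (1 - t) ^ δ) := by
  set N := ⌈δ⌉₊ + 2
  have hδN : δ ≤ N := (Nat.le_ceil δ).trans (by simp [N])
  refine ⟨N * |coeff δ N / δ|, eventually_atTop.2 ⟨N, fun n hn t ⟨ht₀, ht₁⟩ => ?_⟩⟩
  have hpow : 0 ≤ t ^ (α - σ - 1) := Real.rpow_nonneg ht₀.le _
  rw [norm_mul, Real.norm_of_nonneg hpow, Real.norm_eq_abs, abs_abs]
  calc t ^ (α - σ - 1) * |rem δ n t|
      ≤ t ^ (α - σ - 1) * (N * |coeff δ N / δ| * (t * (1 + (1 - t) ^ δ))) := by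
        gcongr
        exact abs_rem_le_mul hδ (by omega) hδN hn ht₀.le ht₁
    _ = N * |coeff δ N / δ| * t ^ (α - σ) * (1 + (1 - t) ^ δ) := by
        rw [Real.rpow_sub_one ht₀.ne']
        field_simp
    _ ≤ N * |coeff δ N / δ| * 1 * (1 + (1 - t) ^ δ) := by
        have := Real.rpow_nonneg (sub_nonneg.2 ht₁.le) δ
        gcongr
        exact Real.rpow_le_one ht₀.le ht₁.le (by linarith)
    _ = N * |coeff δ N / δ| * (1 + (1 - t) ^ δ) := by ring

lemma measurable_rpow_mul_abs_rem (p δ : ℝ) (n : ℕ) :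
    Measurable fun t : ℝ => t ^ p * |rem δ n t| := by
  unfold rem taylorSum
  fun_prop

lemma eventually_integrableOn_rpow_mul_abs_rem {α δ σ : ℝ} (hδ : -1 < δ) (hσα : σ ≤ α) :
    ∀ᶠ n in atTop, IntegrableOn (fun t => t ^ (α - σ - 1) * |rem δ n t|) (Ioo 0 1) := by
  obtain ⟨K, hK⟩ := exists_eventually_norm_rpow_mul_abs_rem_le (α := α) hδ.le hσα
  filter_upwards [hK] with n hn
  exact (((integrableOn_const (by simp)).add (integrableOn_one_sub_rpow hδ)).const_mul K).mono'
    (measurable_rpow_mul_abs_rem _ δ n).aestronglyMeasurable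
    ((ae_restrict_iff' measurableSet_Ioo).2 (Eventually.of_forall hn))

lemma tendsto_setIntegral_rpow_mul_abs_rem {α δ σ : ℝ} (hδ : -1 < δ) (hσα : σ ≤ α) :
    Tendsto (fun n => ∫ t in Ioo 0 1, t ^ (α - σ - 1) * |rem δ n t|) atTop (𝓝 0) := by
  obtain ⟨K, hK⟩ := exists_eventually_norm_rpow_mul_abs_rem_le (α := α) hδ.le hσα
  simpa using tendsto_integral_filter_of_dominated_convergence (f := fun _ => 0) _
    (Eventually.of_forall fun n => (measurable_rpow_mul_abs_rem _ δ n).aestronglyMeasurable)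
    (hK.mono fun n hn => (ae_restrict_iff' measurableSet_Ioo).2 (Eventually.of_forall hn))
    (((integrableOn_const (by simp)).add (integrableOn_one_sub_rpow hδ)).const_mul K)
    ((ae_restrict_iff' measurableSet_Ioo).2 (Eventually.of_forall fun t ⟨ht₀, ht₁⟩ => by
      simpa using ((tendsto_rem hδ.le ht₀.le ht₁).abs.const_mul (t ^ (α - σ - 1)))))

end OneSubRpow

open OneSubRpow in
lemma NKummer_sub_sum_eq_setIntegral_rem {α δ x : ℝ} (hα : 0 < α) (hδ : -1 < δ) (hx : 0 < x)
    (n : ℕ) :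
    NKummer α δ x - ∑ k ∈ Finset.range n, coeff δ k * (lincGamma (α + k) x / x ^ (α + (k : ℝ)))
      = ∫ t in Ioo 0 1, t ^ (α - 1) * rem δ n t * exp (-(x * t)) := by
  have hterm (k : ℕ) : IntegrableOn (fun t => coeff δ k * (t ^ (α + k - 1) * exp (-(x * t))))
      (Ioo 0 1) :=
    (IntegrableOn.mul_exp_neg_mul ((intervalIntegral.integrableOn_Ioo_rpow_iff one_pos).2
      (by have := k.cast_nonneg (α := ℝ); linarith)) hx.le).const_mul _
  simp only [lincGamma_div_rpow _ hx, NKummer, intervalIntegral.integral_of_le zero_le_one,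
    integral_Ioc_eq_integral_Ioo, ← integral_const_mul]
  rw [← integral_finsetSum _ fun k _ => hterm k, ← integral_sub
    (IntegrableOn.mul_exp_neg_mul (integrableOn_rpow_mul_one_sub_rpow (by linarith) hδ) hx.le)
    (integrable_finsetSum _ fun k _ => hterm k)]
  refine setIntegral_congr_fun measurableSet_Ioo fun t ⟨ht₀, _⟩ => ?_
  have hpow (k : ℕ) : t ^ (α + k - 1) = t ^ (α - 1) * t ^ k := by
    rw [add_sub_right_comm, Real.rpow_add ht₀, Real.rpow_natCast]
  simp only [hpow, rem, taylorSum, Finset.mul_sum, Finset.sum_mul, mul_sub, sub_mul]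
  congr 1
  exact Finset.sum_congr rfl fun k _ => by ring

open OneSubRpow in
theorem kummer_gamma_series_uniform_convergence
    (α : ℝ) (hα : 0 < α) (δ : ℝ) (hδ : -1 < δ) (σ : ℝ) (hσ₁ : 0 ≤ σ) (hσ₂ : σ ≤ α) :
    Filter.Tendsto
      (fun n : ℕ => sSup ((fun x : ℝ => x ^ σ *
          |NKummer α δ x - ∑ k ∈ Finset.range n,
            poch (-δ) k / (k.factorial : ℝ) * (lincGamma (α + k) x / x ^ (α + (k:ℝ)))|)
        '' Set.Ioi 0))
      Filter.atTop (nhds 0) := by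
  obtain ⟨C, hC⟩ := exists_rpow_mul_exp_neg_le hσ₁
  refine squeeze_zero' (Eventually.of_forall fun n => Real.sSup_nonneg ?_)
    ((eventually_integrableOn_rpow_mul_abs_rem hδ hσ₂).mono fun n hn => ?_)
    (by simpa using (tendsto_setIntegral_rpow_mul_abs_rem hδ hσ₂).const_mul C)
  · rintro _ ⟨x, hx, rfl⟩
    exact mul_nonneg (Real.rpow_nonneg (le_of_lt hx) _) (abs_nonneg _)
  · refine csSup_le (nonempty_Ioi.image _) ?_
    rintro _ ⟨x, hx, rfl⟩
    have hrem := NKummer_sub_sum_eq_setIntegral_rem hα hδ hx n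
    simp only [coeff] at hrem
    simp only [hrem]
    exact rpow_mul_abs_setIntegral_le hC α hn hx
end
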